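/- Let F = {f_i} be a frame for a Krein space H with synthesis operator T. Then F is a Parseval J-frame for H if and only if: N(T) = (N(T) ∩ ℓ²(I₊)) [∔] (N(T) ∩ ℓ²(I₋)) and T⁺ f_i = (I − F₀) e_i for all i ∈ I, where F₀ is the J₂-selfadjoint projection of ℓ²(I) onto N(T). -/

import Mathlib

noncomputable section

open scoped Classical

open Function

/-- The indefinite inner product `[x,y] = ⟨Jx, y⟩` induced by an operator `J`. -/
def kre {E : Type*} [NormedAddCommGroup E] [InnerProductSpace ℂ E]
    (J : E →L[ℂ] E) (x y : E) : ℂ := @inner ℂ _ _ (J x) y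

/-- `J` is a fundamental symmetry: a selfadjoint unitary (involutive) operator. -/
def IsFundSym {E : Type*} [NormedAddCommGroup E] [InnerProductSpace ℂ E] [CompleteSpace E]
    (J : E →L[ℂ] E) : Prop :=
  IsSelfAdjoint J ∧ J.comp J = ContinuousLinearMap.id ℂ E

/-- The J-orthogonal companion of a subspace. -/
def JorthCompanion {E : Type*} [NormedAddCommGroup E] [InnerProductSpace ℂ E]
    (J : E →L[ℂ] E) (S : Submodule ℂ E) : Submodule ℂ E where
  carrier := {x | ∀ s ∈ S, kre J x s = 0}
  zero_mem' := by intro s hs; simp [kre]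
  add_mem' := by
    intro a b ha hb s hs
    have h1 := ha s hs
    have h2 := hb s hs
    simp only [kre, map_add, inner_add_left] at h1 h2 ⊢
    rw [h1, h2, add_zero]
  smul_mem' := by
    intro c x hx s hs
    have h1 := hx s hs
    simp only [kre, map_smul, inner_smul_left] at h1 ⊢
    rw [h1, mul_zero]

/-- Uniformly J-positive subspace. -/
def UnifJPos {E : Type*} [NormedAddCommGroup E] [InnerProductSpace ℂ E]
    (J : E →L[ℂ] E) (S : Submodule ℂ E) : Prop :=
  ∃ α : ℝ, 0 < α ∧ ∀ x ∈ S, α * ‖x‖ ^ 2 ≤ (kre J x x).re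

/-- Uniformly J-negative subspace. -/
def UnifJNeg {E : Type*} [NormedAddCommGroup E] [InnerProductSpace ℂ E]
    (J : E →L[ℂ] E) (S : Submodule ℂ E) : Prop :=
  ∃ α : ℝ, 0 < α ∧ ∀ x ∈ S, (kre J x x).re ≤ -(α * ‖x‖ ^ 2)

/-- Maximal uniformly J-positive subspace. -/
def MaxUnifJPos {E : Type*} [NormedAddCommGroup E] [InnerProductSpace ℂ E]
    (J : E →L[ℂ] E) (S : Submodule ℂ E) : Prop :=
  UnifJPos J S ∧ ∀ S' : Submodule ℂ E, UnifJPos J S' → S ≤ S' → S' = S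

/-- Maximal uniformly J-negative subspace. -/
def MaxUnifJNeg {E : Type*} [NormedAddCommGroup E] [InnerProductSpace ℂ E]
    (J : E →L[ℂ] E) (S : Submodule ℂ E) : Prop :=
  UnifJNeg J S ∧ ∀ S' : Submodule ℂ E, UnifJNeg J S' → S ≤ S' → S' = S

/-- J-selfadjoint operator (with respect to the indefinite inner product of `J`). -/
def IsJSelfAdj {E : Type*} [NormedAddCommGroup E] [InnerProductSpace ℂ E]
    (J : E →L[ℂ] E) (A : E →L[ℂ] E) : Prop :=
  ∀ x y : E, kre J (A x) y = kre J x (A y)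

/-- The J-order: `A ≤_J B` iff `B - A` is J-positive. -/
def JLe {E : Type*} [NormedAddCommGroup E] [InnerProductSpace ℂ E]
    (J : E →L[ℂ] E) (A B : E →L[ℂ] E) : Prop :=
  ∀ x : E, 0 ≤ (kre J (B x - A x) x).re ∧ (kre J (B x - A x) x).im = 0

/-- The subspace of `ℓ²(I)` supported on a subset (given by a predicate) of `I`. -/
def suppSub {I : Type*} (A : I → Prop) : Submodule ℂ (lp (fun _ : I => ℂ) 2) where
  carrier := {x | ∀ i, ¬ A i → x i = 0}
  zero_mem' := by intro i _; rfl
  add_mem' := by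
    intro a b ha hb i hi
    have : (↑(a + b) : ∀ i, ℂ) i = a i + b i := by
      rw [lp.coeFn_add]; rfl
    simp [this, ha i hi, hb i hi]
  smul_mem' := by
    intro c x hx i hi
    have : (↑(c • x) : ∀ i, ℂ) i = c • x i := by
      rw [lp.coeFn_smul]; rfl
    simp [this, hx i hi]

variable {H : Type*} [NormedAddCommGroup H] [InnerProductSpace ℂ H] [CompleteSpace H]
variable {I : Type*} [DecidableEq I]

/-- `i` is a "positive index" for the family `f` w.r.t. `J`: `[f i, f i] ≥ 0`. -/
def posIdx {H : Type*} [NormedAddCommGroup H] [InnerProductSpace ℂ H]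
    (J : H →L[ℂ] H) (f : I → H) (i : I) : Prop := 0 ≤ (kre J (f i) (f i)).re

/-- The sign `σ_i = sgn [f i, f i]` (as a complex scalar, `+1` on `I₊` and `-1` on `I₋`). -/
def sgnv {H : Type*} [NormedAddCommGroup H] [InnerProductSpace ℂ H]
    (J : H →L[ℂ] H) (f : I → H) (i : I) : ℂ := if posIdx J f i then 1 else -1

/-- Closure of the span of the vectors of the family `h` with positive indices (signs taken
from the family `f`). -/
def posSpan {H : Type*} [NormedAddCommGroup H] [InnerProductSpace ℂ H]
    (J : H →L[ℂ] H) (f h : I → H) : Submodule ℂ H :=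
  (Submodule.span ℂ {x | ∃ i, posIdx J f i ∧ h i = x}).topologicalClosure

/-- Closure of the span of the vectors of the family `h` with negative indices. -/
def negSpan {H : Type*} [NormedAddCommGroup H] [InnerProductSpace ℂ H]
    (J : H →L[ℂ] H) (f h : I → H) : Submodule ℂ H :=
  (Submodule.span ℂ {x | ∃ i, ¬ posIdx J f i ∧ h i = x}).topologicalClosure

/-- A Bessel family in a Hilbert space. -/
def IsBessel {H : Type*} [NormedAddCommGroup H] [InnerProductSpace ℂ H]
    (g : I → H) : Prop :=
  ∃ β : ℝ, ∀ (x : H) (s : Finset I),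
    ∑ i ∈ s, ‖@inner ℂ _ _ (g i) x‖ ^ 2 ≤ β * ‖x‖ ^ 2

/-- `g` is a dual family for `f`: the signs coincide and the two indefinite
reconstruction formulas hold. -/
def IsDualFamily {H : Type*} [NormedAddCommGroup H] [InnerProductSpace ℂ H]
    (J : H →L[ℂ] H) (f g : I → H) : Prop :=
  (∀ i, Real.sign ((kre J (g i) (g i)).re) = Real.sign ((kre J (f i) (f i)).re)) ∧
  (∀ x : H, HasSum (fun i => (sgnv J f i * kre J x (f i)) • g i) x) ∧
  (∀ x : H, HasSum (fun i => (sgnv J f i * kre J x (g i)) • f i) x)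


/-!
Once `T T⁺ = I`, the operator `T⁺ T` is a `J₂`-selfadjoint idempotent with kernel `N(T)`, so
`F₀ = I - T⁺ T` is the required projection; in general `T⁺ f_i = (I - F₀) e_i` says exactly
`T⁺ T = I - F₀`.

Given a Parseval J-frame, a kernel vector `x` splits: `T P₊ x = -T P₋ x` lies both in a uniformly
positive and in a uniformly negative subspace, hence vanishes. Conversely, the splitting makes
`N(T)` and its `J₂`-orthogonal companion `ker F₀` invariant under `P₊`, so `F₀` commutes with `P₊`.
Then `T⁺` maps `R(T P_±)` into `ℓ²(I_±)` and is a Krein isometry there (`T T⁺ = I`), which makes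
`R(T P_±)` uniformly definite with constant `(‖T‖² + 1)⁻¹`. Maximality follows from
`R(T P₊) + R(T P₋) = H`, since subspaces of opposite uniform definiteness meet trivially.
-/

open ContinuousLinearMap Module.End

section Krein

variable {E : Type*} [NormedAddCommGroup E] [InnerProductSpace ℂ E]
  {J A : E →L[ℂ] E} {S S' : Submodule ℂ E}

theorem kre_neg (x y : E) : kre (-J) x y = -kre J x y := by
  simp only [kre, neg_apply, inner_neg_left]

theorem kre_conj [CompleteSpace E] (hJ : IsSelfAdjoint J) (x y : E) :
    starRingEnd ℂ (kre J y x) = kre J x y := by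
  rw [kre, inner_conj_symm, kre]
  exact (isSelfAdjoint_iff_isSymmetric.mp hJ x y).symm

theorem IsFundSym.injective [CompleteSpace E] (hJ : IsFundSym J) : Function.Injective J :=
  Function.LeftInverse.injective (g := J) fun x => by
    rw [← ContinuousLinearMap.comp_apply, hJ.2, ContinuousLinearMap.id_apply]

theorem re_kre_self_of_apply_eq_self {x : E} (hx : J x = x) : (kre J x x).re = ‖x‖ ^ 2 := by
  rw [kre, hx]
  exact inner_self_eq_norm_sq (𝕜 := ℂ) x

theorem unifJNeg_iff_unifJPos_neg : UnifJNeg J S ↔ UnifJPos (-J) S := by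
  simp only [UnifJNeg, UnifJPos, kre_neg, Complex.neg_re, le_neg]

theorem maxUnifJNeg_iff_maxUnifJPos_neg : MaxUnifJNeg J S ↔ MaxUnifJPos (-J) S := by
  simp only [MaxUnifJNeg, MaxUnifJPos, unifJNeg_iff_unifJPos_neg]

theorem UnifJPos.disjoint (hS : UnifJPos J S) (hS' : UnifJNeg J S') : Disjoint S S' := by
  obtain ⟨α, hα, hpos⟩ := hS
  obtain ⟨β, hβ, hneg⟩ := hS'
  refine Submodule.disjoint_def.mpr fun v hv hv' => ?_
  have hv2 : (α + β) * ‖v‖ ^ 2 ≤ 0 := by linarith [hpos v hv, hneg v hv']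
  have hv0 : ‖v‖ ^ 2 ≤ 0 := nonpos_of_mul_nonpos_right hv2 (by positivity)
  simpa using hv0

theorem UnifJPos.maxUnifJPos (hS : UnifJPos J S) (hS' : UnifJNeg J S') (htop : S ⊔ S' = ⊤) :
    MaxUnifJPos J S := by
  refine ⟨hS, fun S'' hS'' hle => le_antisymm (fun s hs => ?_) hle⟩
  obtain ⟨a, ha, b, hb, rfl⟩ := Submodule.mem_sup.mp (htop ▸ Submodule.mem_top : s ∈ S ⊔ S')
  have hb'' : b ∈ S'' := by simpa using S''.sub_mem hs (hle ha)
  rwa [Submodule.disjoint_def.mp (hS''.disjoint hS') b hb'' hb, add_zero]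

theorem UnifJNeg.maxUnifJNeg (hS : UnifJPos J S) (hS' : UnifJNeg J S') (htop : S ⊔ S' = ⊤) :
    MaxUnifJNeg J S' := by
  rw [maxUnifJNeg_iff_maxUnifJPos_neg]
  refine (unifJNeg_iff_unifJPos_neg.mp hS').maxUnifJPos ?_ (sup_comm S S' ▸ htop)
  rwa [unifJNeg_iff_unifJPos_neg, neg_neg]

theorem IsJSelfAdj.id_sub (hA : IsJSelfAdj J A) :
    IsJSelfAdj J (ContinuousLinearMap.id ℂ E - A) := by
  intro x y
  have h := hA x y
  unfold kre at h ⊢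
  simp only [sub_apply, ContinuousLinearMap.id_apply, map_sub, inner_sub_left, inner_sub_right, h]

theorem ker_eq_jorthCompanion_range (hJ : Function.Injective J) (hA : IsJSelfAdj J A) :
    LinearMap.ker (A : E →ₗ[ℂ] E) = JorthCompanion J (LinearMap.range (A : E →ₗ[ℂ] E)) := by
  ext k
  refine ⟨fun hk s ⟨z, hz⟩ => ?_, fun hk => ?_⟩
  · rw [← hz, coe_coe, ← hA, show A k = 0 from hk, kre, map_zero, inner_zero_left]
  · have hJA : J (A k) = 0 := ext_inner_right ℂ fun z => by
      rw [inner_zero_left, ← kre, hA]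
      exact hk _ ⟨z, rfl⟩
    exact hJ (hJA.trans (map_zero J).symm)

theorem jorthCompanion_mem_invtSubmodule (hA : IsJSelfAdj J A)
    (hS : S ∈ invtSubmodule (A : E →ₗ[ℂ] E)) :
    JorthCompanion J S ∈ invtSubmodule (A : E →ₗ[ℂ] E) := by
  intro x hx s hs
  rw [coe_coe, hA]
  exact hx _ (hS hs)

theorem commute_of_isJSelfAdj (hJ : Function.Injective J) {F0 : E →L[ℂ] E}
    (hF0 : IsIdempotentElem F0) (hF0J : IsJSelfAdj J F0) (hAJ : IsJSelfAdj J A)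
    (hinvt : LinearMap.range (F0 : E →ₗ[ℂ] E) ∈ invtSubmodule (A : E →ₗ[ℂ] E)) :
    Commute F0 A :=
  (IsIdempotentElem.commute_iff hF0).mpr ⟨hinvt,
    ker_eq_jorthCompanion_range hJ hF0J ▸ jorthCompanion_mem_invtSubmodule hAJ hinvt⟩

end Krein

section Synthesis

variable {E F : Type*} [NormedAddCommGroup E] [NormedSpace ℂ E]
  [NormedAddCommGroup F] [InnerProductSpace ℂ F] {T : E →L[ℂ] F} {Tp : F →L[ℂ] E}

theorem unifJPos_of_kre_eq_norm_sq_lift {J : F →L[ℂ] F} {S : Submodule ℂ F} {L : F → E}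
    (hTL : ∀ v ∈ S, T (L v) = v) (hkre : ∀ v ∈ S, (kre J v v).re = ‖L v‖ ^ 2) :
    UnifJPos J S := by
  refine ⟨(‖T‖ ^ 2 + 1)⁻¹, by positivity, fun v hv => ?_⟩
  have hle : ‖v‖ ≤ ‖T‖ * ‖L v‖ := (congrArg norm (hTL v hv)).symm.trans_le (T.le_opNorm _)
  have hsq : ‖v‖ ^ 2 ≤ ‖T‖ ^ 2 * ‖L v‖ ^ 2 := by
    rw [← mul_pow]; exact pow_le_pow_left₀ (norm_nonneg v) hle 2
  rw [hkre v hv, inv_mul_le_iff₀ (by positivity)]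
  nlinarith [sq_nonneg ‖L v‖]

theorem apply_eq_zero_of_unifJPos_of_unifJNeg {J : F →L[ℂ] F} {P Q : E →L[ℂ] E}
    (hpos : UnifJPos J (LinearMap.range ((T.comp P : E →L[ℂ] F) : E →ₗ[ℂ] F)))
    (hneg : UnifJNeg J (LinearMap.range ((T.comp Q : E →L[ℂ] F) : E →ₗ[ℂ] F)))
    (hPQ : ∀ x, P x + Q x = x) {x : E} (hx : T x = 0) : T (P x) = 0 := by
  have hPx : T (P x) = -T (Q x) :=
    eq_neg_of_add_eq_zero_left (by rw [← map_add, hPQ]; exact hx)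
  exact Submodule.disjoint_def.mp (hpos.disjoint hneg) _ ⟨x, rfl⟩
    (hPx ▸ Submodule.neg_mem _ ⟨x, rfl⟩)

theorem range_comp_sup_range_comp_eq_top (hT : Function.Surjective T) {P Q : E →L[ℂ] E}
    (hPQ : ∀ x, P x + Q x = x) :
    LinearMap.range ((T.comp P : E →L[ℂ] F) : E →ₗ[ℂ] F) ⊔
      LinearMap.range ((T.comp Q : E →L[ℂ] F) : E →ₗ[ℂ] F) = ⊤ := by
  refine eq_top_iff.mpr fun y _ => ?_
  obtain ⟨x, rfl⟩ := hT y
  rw [← hPQ x, map_add]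
  exact Submodule.add_mem_sup ⟨x, rfl⟩ ⟨x, rfl⟩

theorem isIdempotentElem_comp_of_comp_eq_id (hTTp : T.comp Tp = ContinuousLinearMap.id ℂ F) :
    IsIdempotentElem (Tp.comp T) := by
  change (Tp.comp T).comp (Tp.comp T) = Tp.comp T
  rw [ContinuousLinearMap.comp_assoc, ← ContinuousLinearMap.comp_assoc T, hTTp,
    ContinuousLinearMap.id_comp]

theorem range_id_sub_comp_eq_ker (hTTp : T.comp Tp = ContinuousLinearMap.id ℂ F) :
    LinearMap.range ((ContinuousLinearMap.id ℂ E - Tp.comp T : E →L[ℂ] E) : E →ₗ[ℂ] E) =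
      LinearMap.ker (T : E →ₗ[ℂ] F) := by
  ext x
  constructor
  · rintro ⟨y, rfl⟩
    change T (y - Tp (T y)) = 0
    rw [map_sub, ← ContinuousLinearMap.comp_apply T Tp, hTTp, ContinuousLinearMap.id_apply,
      sub_self]
  · intro hx
    refine ⟨x, ?_⟩
    change x - Tp (T x) = x
    rw [show T x = 0 from hx, map_zero, sub_zero]

theorem comp_eq_id_of_comp_eq_id_sub (hT : Function.Surjective T) {F0 : E →L[ℂ] E}
    (hF0 : LinearMap.range (F0 : E →ₗ[ℂ] E) ≤ LinearMap.ker (T : E →ₗ[ℂ] F))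
    (hTpT : Tp.comp T = ContinuousLinearMap.id ℂ E - F0) :
    T.comp Tp = ContinuousLinearMap.id ℂ F := by
  refine ext fun y => ?_
  obtain ⟨x, rfl⟩ := hT y
  have hTF0 : T (F0 x) = 0 := hF0 ⟨x, rfl⟩
  rw [ContinuousLinearMap.comp_apply, ← ContinuousLinearMap.comp_apply Tp, hTpT, sub_apply,
    map_sub, hTF0, sub_zero, ContinuousLinearMap.id_apply, ContinuousLinearMap.id_apply]

end Synthesis

section Adjoint

variable {E F : Type*} [NormedAddCommGroup E] [InnerProductSpace ℂ E]
  [NormedAddCommGroup F] [InnerProductSpace ℂ F]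
  {J : F →L[ℂ] F} {J₂ : E →L[ℂ] E} {T : E →L[ℂ] F} {Tp : F →L[ℂ] E}

theorem kre_self_eq_of_comp_eq_id (hTp : ∀ x y, kre J (T x) y = kre J₂ x (Tp y))
    (hTTp : T.comp Tp = ContinuousLinearMap.id ℂ F) (y : F) :
    kre J y y = kre J₂ (Tp y) (Tp y) :=
  calc kre J y y = kre J (T (Tp y)) y := by
        rw [← ContinuousLinearMap.comp_apply, hTTp, ContinuousLinearMap.id_apply]
    _ = kre J₂ (Tp y) (Tp y) := hTp _ _

theorem unifJPos_of_apply_eq_self (hTp : ∀ x y, kre J (T x) y = kre J₂ x (Tp y))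
    (hTTp : T.comp Tp = ContinuousLinearMap.id ℂ F) {S : Submodule ℂ F}
    (hS : ∀ v ∈ S, J₂ (Tp v) = Tp v) : UnifJPos J S := by
  refine unifJPos_of_kre_eq_norm_sq_lift (T := T) (L := Tp) (fun v _ => ?_) fun v hv => ?_
  · rw [← ContinuousLinearMap.comp_apply, hTTp, ContinuousLinearMap.id_apply]
  · rw [kre_self_eq_of_comp_eq_id hTp hTTp, re_kre_self_of_apply_eq_self (hS v hv)]

theorem isJSelfAdj_comp [CompleteSpace E] [CompleteSpace F]
    (hTp : ∀ x y, kre J (T x) y = kre J₂ x (Tp y)) (hJ : IsSelfAdjoint J)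
    (hJ₂ : IsSelfAdjoint J₂) : IsJSelfAdj J₂ (Tp.comp T) := by
  intro a b
  rw [ContinuousLinearMap.comp_apply, ContinuousLinearMap.comp_apply, ← kre_conj hJ₂, ← hTp, ← hTp,
    kre_conj hJ]

theorem unifJPos_range_comp (hTp : ∀ x y, kre J (T x) y = kre J₂ x (Tp y))
    (hTTp : T.comp Tp = ContinuousLinearMap.id ℂ F) {F0 P : E →L[ℂ] E}
    (hTpT : Tp.comp T = ContinuousLinearMap.id ℂ E - F0) (hcomm : Commute F0 P)
    (hP : ∀ u, J₂ (P u) = P u) :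
    UnifJPos J (LinearMap.range ((T.comp P : E →L[ℂ] F) : E →ₗ[ℂ] F)) := by
  refine unifJPos_of_apply_eq_self hTp hTTp ?_
  rintro _ ⟨u, rfl⟩
  have hlift : Tp (T (P u)) = P (u - F0 u) := by
    rw [← ContinuousLinearMap.comp_apply Tp, hTpT, sub_apply, ContinuousLinearMap.id_apply,
      map_sub, show F0 (P u) = P (F0 u) from DFunLike.congr_fun hcomm.eq u]
  rw [coe_coe, ContinuousLinearMap.comp_apply, hlift, hP]

end Adjoint

local notation "ℓ²(" ι ")" => lp (fun _ : ι => ℂ) 2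

section CoordinateProjection

variable {ι : Type*} {p : ι → Prop} [DecidablePred p] {P Q : ℓ²(ι) →L[ℂ] ℓ²(ι)}

theorem apply_eq_ite_not (hQ : ∀ x i, Q x i = if p i then 0 else x i) (x : ℓ²(ι)) (i : ι) :
    Q x i = if ¬p i then x i else 0 := by
  rw [hQ, ite_not]

theorem apply_mem_suppSub (hP : ∀ x i, P x i = if p i then x i else 0) (x : ℓ²(ι)) :
    P x ∈ suppSub p := fun i hi => by rw [hP, if_neg hi]

theorem apply_eq_self_of_mem_suppSub (hP : ∀ x i, P x i = if p i then x i else 0)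
    {x : ℓ²(ι)} (hx : x ∈ suppSub p) : P x = x :=
  lp.ext <| funext fun i => by
    rw [hP]
    split_ifs with hi
    · rfl
    · exact (hx i hi).symm

theorem apply_eq_zero_of_mem_suppSub (hP : ∀ x i, P x i = if p i then x i else 0)
    {x : ℓ²(ι)} (hx : x ∈ suppSub (¬p ·)) : P x = 0 :=
  lp.ext <| funext fun i => by
    rw [hP]
    split_ifs with hi
    · exact hx i (not_not_intro hi)
    · rfl

theorem isSelfAdjoint_of_apply_eq_ite (hP : ∀ x i, P x i = if p i then x i else 0) :
    IsSelfAdjoint P :=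
  isSelfAdjoint_iff_isSymmetric.mpr fun x y => by
    change inner ℂ (P x) y = inner ℂ x (P y)
    rw [lp.inner_eq_tsum, lp.inner_eq_tsum]
    refine tsum_congr fun i => ?_
    rw [hP, hP]
    split_ifs <;> simp

theorem add_apply_eq_self (hP : ∀ x i, P x i = if p i then x i else 0)
    (hQ : ∀ x i, Q x i = if p i then 0 else x i) (x : ℓ²(ι)) : P x + Q x = x :=
  lp.ext <| funext fun i => by
    rw [lp.coeFn_add, Pi.add_apply, hP, hQ]
    split_ifs <;> simp

theorem sub_apply_of_mem_suppSub (hP : ∀ x i, P x i = if p i then x i else 0)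
    (hQ : ∀ x i, Q x i = if p i then 0 else x i) {x : ℓ²(ι)} (hx : x ∈ suppSub p) :
    (P - Q) x = x := by
  rw [sub_apply, eq_sub_of_add_eq' (add_apply_eq_self hP hQ x),
    apply_eq_self_of_mem_suppSub hP hx, sub_self, sub_zero]

theorem sub_apply_of_mem_suppSub_not (hP : ∀ x i, P x i = if p i then x i else 0)
    (hQ : ∀ x i, Q x i = if p i then 0 else x i) {x : ℓ²(ι)} (hx : x ∈ suppSub (¬p ·)) :
    (P - Q) x = -x := by
  rw [sub_apply, eq_sub_of_add_eq' (add_apply_eq_self hP hQ x),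
    apply_eq_zero_of_mem_suppSub hP hx, sub_zero, zero_sub]

theorem isFundSym_sub (hP : ∀ x i, P x i = if p i then x i else 0)
    (hQ : ∀ x i, Q x i = if p i then 0 else x i) : IsFundSym (P - Q) := by
  refine ⟨(isSelfAdjoint_of_apply_eq_ite hP).sub
    (isSelfAdjoint_of_apply_eq_ite (apply_eq_ite_not hQ)), ext fun x => ?_⟩
  conv_rhs => rw [ContinuousLinearMap.id_apply, ← add_apply_eq_self hP hQ x]
  rw [ContinuousLinearMap.comp_apply, sub_apply P Q x, map_sub,
    sub_apply_of_mem_suppSub hP hQ (apply_mem_suppSub hP x),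
    sub_apply_of_mem_suppSub_not hP hQ (apply_mem_suppSub (apply_eq_ite_not hQ) x),
    sub_neg_eq_add]

theorem isJSelfAdj_sub_left (hP : ∀ x i, P x i = if p i then x i else 0)
    (hQ : ∀ x i, Q x i = if p i then 0 else x i) : IsJSelfAdj (P - Q) P := by
  intro x y
  have hPsymm : ∀ x y, inner ℂ (P x) y = inner ℂ x (P y) :=
    (isSelfAdjoint_of_apply_eq_ite hP).isSymmetric
  have hJsymm : ∀ x y, inner ℂ ((P - Q) x) y = inner ℂ x ((P - Q) y) :=
    (isFundSym_sub hP hQ).1.isSymmetric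
  rw [kre, kre, sub_apply_of_mem_suppSub hP hQ (apply_mem_suppSub hP x), hPsymm,
    hJsymm, sub_apply_of_mem_suppSub hP hQ (apply_mem_suppSub hP y)]

theorem eq_inf_sup_inf_iff_mem_invtSubmodule (hP : ∀ x i, P x i = if p i then x i else 0)
    (hQ : ∀ x i, Q x i = if p i then 0 else x i) (N : Submodule ℂ ℓ²(ι)) :
    N = N ⊓ suppSub p ⊔ N ⊓ suppSub (¬p ·) ↔ N ∈ invtSubmodule (P : ℓ²(ι) →ₗ[ℂ] ℓ²(ι)) := by
  constructor
  · intro hN x hx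
    rw [hN] at hx
    obtain ⟨a, ha, b, hb, rfl⟩ := Submodule.mem_sup.mp hx
    change P (a + b) ∈ N
    rw [map_add, apply_eq_self_of_mem_suppSub hP ha.2, apply_eq_zero_of_mem_suppSub hP hb.2,
      add_zero]
    exact ha.1
  · intro hN
    refine le_antisymm (fun x hx => ?_) (sup_le inf_le_left inf_le_left)
    have hPx : P x ∈ N := hN hx
    rw [← add_apply_eq_self hP hQ x]
    refine Submodule.add_mem_sup ⟨hPx, apply_mem_suppSub hP x⟩
      ⟨?_, apply_mem_suppSub (apply_eq_ite_not hQ) x⟩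
    rw [eq_sub_of_add_eq' (add_apply_eq_self hP hQ x)]
    exact N.sub_mem hx hPx

end CoordinateProjection

/-- A frame `F` for the Krein space `H` is a Parseval J-frame iff `N(T)`
splits along `ℓ²(I₊) ⊕ ℓ²(I₋)` and `T⁺ f_i = (I - F₀) e_i` for the J₂-selfadjoint
projection `F₀` onto `N(T)`. -/
theorem parseval_jframe_iff_kernel_projection
    (J : H →L[ℂ] H) (hJ : IsFundSym J) (f : I → H)
    (T : lp (fun _ : I => ℂ) 2 →L[ℂ] H)
    (hT : ∀ i, T (lp.single 2 i (1:ℂ)) = f i)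
    (hTsurj : Function.Surjective T)
    (Pp Pm : lp (fun _ : I => ℂ) 2 →L[ℂ] lp (fun _ : I => ℂ) 2)
    (hPp : ∀ (x : lp (fun _ : I => ℂ) 2) (i : I), Pp x i = if posIdx J f i then x i else 0)
    (hPm : ∀ (x : lp (fun _ : I => ℂ) 2) (i : I), Pm x i = if posIdx J f i then 0 else x i)
    (Tp : H →L[ℂ] lp (fun _ : I => ℂ) 2)
    (hTp : ∀ (x : lp (fun _ : I => ℂ) 2) (y : H), kre J (T x) y = kre (Pp - Pm) x (Tp y)) :
    (MaxUnifJPos J (LinearMap.range ((T.comp Pp : lp (fun _ : I => ℂ) 2 →L[ℂ] H) : lp (fun _ : I => ℂ) 2 →ₗ[ℂ] H)) ∧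
        MaxUnifJNeg J (LinearMap.range ((T.comp Pm : lp (fun _ : I => ℂ) 2 →L[ℂ] H) : lp (fun _ : I => ℂ) 2 →ₗ[ℂ] H)) ∧
        T.comp Tp = ContinuousLinearMap.id ℂ H) ↔
      (LinearMap.ker (T : lp (fun _ : I => ℂ) 2 →ₗ[ℂ] H) =
          (LinearMap.ker (T : lp (fun _ : I => ℂ) 2 →ₗ[ℂ] H) ⊓ suppSub (posIdx J f)) ⊔
            (LinearMap.ker (T : lp (fun _ : I => ℂ) 2 →ₗ[ℂ] H) ⊓ suppSub (fun i => ¬ posIdx J f i)) ∧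
        ∃ F0 : lp (fun _ : I => ℂ) 2 →L[ℂ] lp (fun _ : I => ℂ) 2, F0.comp F0 = F0 ∧ IsJSelfAdj (Pp - Pm) F0 ∧
          LinearMap.range (F0 : lp (fun _ : I => ℂ) 2 →ₗ[ℂ] lp (fun _ : I => ℂ) 2) = (LinearMap.ker (T : lp (fun _ : I => ℂ) 2 →ₗ[ℂ] H) : Submodule ℂ (lp (fun _ : I => ℂ) 2)) ∧
          ∀ i, Tp (f i) =
            (ContinuousLinearMap.id ℂ (lp (fun _ : I => ℂ) 2) - F0) (lp.single 2 i (1:ℂ))) := by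
  have hJ₂ := isFundSym_sub hPp hPm
  have hPpPm := add_apply_eq_self hPp hPm
  constructor
  · rintro ⟨hpos, hneg, hTTp⟩
    refine ⟨(eq_inf_sup_inf_iff_mem_invtSubmodule hPp hPm _).mpr fun x hx =>
        apply_eq_zero_of_unifJPos_of_unifJNeg hpos.1 hneg.1 hPpPm hx,
      ContinuousLinearMap.id ℂ _ - Tp.comp T, (isIdempotentElem_comp_of_comp_eq_id hTTp).one_sub,
      (isJSelfAdj_comp hTp hJ.1 hJ₂.1).id_sub, range_id_sub_comp_eq_ker hTTp,
      fun i => by simp [← hT]⟩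
  · rintro ⟨hsplit, F0, hidem, hF0, hrange, hF0f⟩
    have hTpT : Tp.comp T = ContinuousLinearMap.id ℂ _ - F0 :=
      lp.ext_continuousLinearMap ENNReal.ofNat_ne_top fun i =>
        ext_ring (by simpa [hT] using hF0f i)
    have hTTp := comp_eq_id_of_comp_eq_id_sub hTsurj hrange.le hTpT
    have hcommP : Commute F0 Pp := commute_of_isJSelfAdj hJ₂.injective hidem hF0
      (isJSelfAdj_sub_left hPp hPm)
      (hrange ▸ (eq_inf_sup_inf_iff_mem_invtSubmodule hPp hPm _).mp hsplit)
    have hcommM : Commute F0 Pm := by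
      rw [show Pm = 1 - Pp from ext fun x => eq_sub_of_add_eq' (hPpPm x)]
      exact (Commute.one_right F0).sub_right hcommP
    have hpos := unifJPos_range_comp hTp hTTp hTpT hcommP fun u =>
      sub_apply_of_mem_suppSub hPp hPm (apply_mem_suppSub hPp u)
    have hneg := unifJNeg_iff_unifJPos_neg.mpr <|
      unifJPos_range_comp (J := -J) (J₂ := -(Pp - Pm))
        (fun x y => by rw [kre_neg, kre_neg, hTp]) hTTp hTpT hcommM fun u => by
          rw [neg_apply, sub_apply_of_mem_suppSub_not hPp hPm
            (apply_mem_suppSub (apply_eq_ite_not hPm) u), neg_neg]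
    have htop := range_comp_sup_range_comp_eq_top hTsurj hPpPm
    exact ⟨hpos.maxUnifJPos hneg htop, hneg.maxUnifJNeg hpos htop, hTTp⟩
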